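/- arXiv:1004.3986 — 2 statements merged into one kernel-verified Lean document; each statement's English description precedes it below -/
import Mathlib

section
/- Let 0 < β < 1, λ > 0, μ > 0. With Φ(r) = r^β sin(βπ)/(r^{2β} sin²(βπ) + (μ − λ^β + r^β cos(βπ))²), the function h(t) = (μ/π) ∫₀^∞ (r+λ)^{-1} e^{-t(r+λ)} Φ(r) dr is differentiable for t > 0 and satisfies the bound |h'(t)| ≤ μ e^{-λt} t^{β-1} Γ(1-β) / (π sin(βπ)). -/
open MeasureTheory Real Set

theorem derivative_bound_inverse_subordinator_LT (β lam μ : ℝ)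
    (hβ0 : 0 < β) (hβ1 : β < 1) (hlam : 0 < lam) (hμ : 0 < μ)
    (Φ : ℝ → ℝ)
    (hΦ : ∀ r > (0:ℝ), Φ r = r ^ β * Real.sin (β * Real.pi) /
        ((r ^ (2 * β)) * (Real.sin (β * Real.pi)) ^ 2 +
          (μ - lam ^ β + r ^ β * Real.cos (β * Real.pi)) ^ 2))
    (h : ℝ → ℝ)
    (hh : ∀ t, h t = (μ / Real.pi) *
      ∫ r in Set.Ioi (0:ℝ), (r + lam)⁻¹ * Real.exp (-t * (r + lam)) * Φ r) :
    ∀ t > (0:ℝ), DifferentiableAt ℝ h t ∧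
      |deriv h t| ≤ μ * Real.exp (-lam * t) * t ^ (β - 1) * Real.Gamma (1 - β) /
        (Real.pi * Real.sin (β * Real.pi)) := by
  intro t ht
  have hπ := Real.pi_pos
  set s := Real.sin (β * Real.pi) with hs_def
  have hsin : 0 < s := Real.sin_pos_of_pos_of_lt_pi (by positivity) (by nlinarith)
  -- bound on Φ
  have hΦle : ∀ r ∈ Ioi (0:ℝ), 0 ≤ Φ r ∧ Φ r ≤ r ^ (-β) / s := by
    intro r hr
    rw [mem_Ioi] at hr
    have hrβ : 0 < r ^ β := Real.rpow_pos_of_pos hr β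
    have h2β : r ^ (2*β) = (r ^ β)^2 := by
      rw [two_mul, Real.rpow_add hr, sq]
    have hΦr : Φ r = r ^ β * s /
        ((r ^ β)^2 * s^2 + (μ - lam ^ β + r ^ β * Real.cos (β * Real.pi)) ^ 2) := by
      rw [hΦ r hr, h2β]
    have hD0 : 0 < (r ^ β)^2 * s^2 := by positivity
    have hDle : (r ^ β)^2 * s^2 ≤ (r ^ β)^2 * s^2 +
        (μ - lam ^ β + r ^ β * Real.cos (β * Real.pi)) ^ 2 :=
      le_add_of_nonneg_right (sq_nonneg _)
    constructor
    · rw [hΦr]; positivity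
    · rw [hΦr]
      calc r ^ β * s / ((r ^ β)^2 * s^2 + (μ - lam ^ β + r ^ β * Real.cos (β * Real.pi)) ^ 2)
          ≤ r ^ β * s / ((r ^ β)^2 * s^2) := by
            gcongr
        _ = r ^ (-β) / s := by
            rw [Real.rpow_neg hr.le]
            field_simp
  -- measurability of Φ on Ioi 0
  have hΦmeas : AEStronglyMeasurable Φ (volume.restrict (Ioi (0:ℝ))) := by
    have hcont : ContinuousOn (fun r : ℝ => r ^ β * s /
        ((r ^ (2 * β)) * s ^ 2 + (μ - lam ^ β + r ^ β * Real.cos (β * Real.pi)) ^ 2))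
        (Ioi 0) := by
      have hrp : ∀ c : ℝ, ContinuousOn (fun r : ℝ => r ^ c) (Ioi (0:ℝ)) := fun c =>
        continuousOn_id.rpow_const (fun x hx => Or.inl (ne_of_gt hx))
      apply ContinuousOn.div
      · exact (hrp β).mul continuousOn_const
      · exact ((hrp (2*β)).mul continuousOn_const).add
          ((continuousOn_const.add ((hrp β).mul continuousOn_const)).pow 2)
      · intro r hr
        rw [mem_Ioi] at hr
        have h1 : (0:ℝ) < r ^ (2*β) := Real.rpow_pos_of_pos hr _
        have h2 : (0:ℝ) < s ^ 2 := by positivity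
        nlinarith [sq_nonneg (μ - lam ^ β + r ^ β * Real.cos (β * Real.pi))]
    refine (hcont.aestronglyMeasurable measurableSet_Ioi).congr ?_
    filter_upwards [ae_restrict_mem measurableSet_Ioi] with r hr
    exact (hΦ r hr).symm
  -- integrability of the scaled gamma-type integrand
  have hGint : ∀ b : ℝ, 0 < b →
      IntegrableOn (fun r : ℝ => r ^ (-β) * Real.exp (-b * r)) (Ioi 0) := by
    intro b hb
    have := integrableOn_rpow_mul_exp_neg_mul_rpow (by linarith : (-1:ℝ) < -β) (by norm_num : (0:ℝ) < 1) hb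
    simpa [Real.rpow_one] using this
  set F : ℝ → ℝ → ℝ := fun u r => (r + lam)⁻¹ * Real.exp (-u * (r + lam)) * Φ r with hF_def
  set F' : ℝ → ℝ → ℝ := fun u r => -Real.exp (-u * (r + lam)) * Φ r with hF'_def
  have hFmeas : ∀ u : ℝ, AEStronglyMeasurable (F u) (volume.restrict (Ioi (0:ℝ))) := by
    intro u
    have hcont : ContinuousOn (fun r : ℝ => (r + lam)⁻¹ * Real.exp (-u * (r + lam)))
        (Ioi 0) := by
      apply ContinuousOn.mul
      · exact (continuousOn_id.add continuousOn_const).inv₀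
          (fun r hr => by rw [mem_Ioi] at hr; show r + lam ≠ 0; positivity)
      · exact (Real.continuous_exp.comp (by fun_prop)).continuousOn
    exact ((hcont.aestronglyMeasurable measurableSet_Ioi).mul hΦmeas).congr
      (Filter.Eventually.of_forall fun r => by simp [hF_def, mul_assoc])
  have hF'meas : ∀ u : ℝ, AEStronglyMeasurable (F' u) (volume.restrict (Ioi (0:ℝ))) := by
    intro u
    exact ((Continuous.aestronglyMeasurable (by fun_prop)).mul hΦmeas)
  -- key derivative
  have key : HasDerivAt (fun u => ∫ r in Ioi (0:ℝ), F u r)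
      (∫ r in Ioi (0:ℝ), F' t r) t := by
    have hball : ∀ u ∈ Metric.ball t (t/2), t/2 ≤ u := by
      intro u hu
      rw [Metric.mem_ball, Real.dist_eq, abs_lt] at hu
      linarith [hu.1]
    have hbound_int : Integrable
        (fun r : ℝ => (Real.exp (-(t/2) * lam) / s) * (r ^ (-β) * Real.exp (-(t/2) * r)))
        (volume.restrict (Ioi (0:ℝ))) :=
      (hGint (t/2) (by linarith)).const_mul _
    have hFt_int : Integrable (F t) (volume.restrict (Ioi (0:ℝ))) := by
      apply Integrable.mono'
        (((hGint t ht).const_mul (lam⁻¹ * Real.exp (-t * lam) / s)))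
        (hFmeas t)
      filter_upwards [ae_restrict_mem measurableSet_Ioi] with r hr
      obtain ⟨h0, h1⟩ := hΦle r hr
      rw [mem_Ioi] at hr
      have hrl : (0:ℝ) < r + lam := by linarith
      have he : Real.exp (-t * (r + lam)) = Real.exp (-t * lam) * Real.exp (-t * r) := by
        rw [← Real.exp_add]; ring_nf
      have hnorm : ‖F t r‖ = (r + lam)⁻¹ * Real.exp (-t * (r + lam)) * Φ r := by
        rw [Real.norm_eq_abs, abs_of_nonneg (by positivity)]
      rw [hnorm, he]
      have hinv : (r + lam)⁻¹ ≤ lam⁻¹ := by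
        apply inv_anti₀ hlam; linarith
      have hrb : (0:ℝ) ≤ r ^ (-β) := (Real.rpow_pos_of_pos hr _).le
      calc (r + lam)⁻¹ * (Real.exp (-t * lam) * Real.exp (-t * r)) * Φ r
          ≤ lam⁻¹ * (Real.exp (-t * lam) * Real.exp (-t * r)) * (r ^ (-β) / s) := by
            apply mul_le_mul _ h1 h0 (by positivity)
            apply mul_le_mul_of_nonneg_right hinv (by positivity)
        _ = lam⁻¹ * Real.exp (-t * lam) / s * (r ^ (-β) * Real.exp (-t * r)) := by
            ring
    have := hasDerivAt_integral_of_dominated_loc_of_deriv_le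
      (F := F) (F' := F') (x₀ := t)
      (bound := fun r : ℝ => (Real.exp (-(t/2) * lam) / s) * (r ^ (-β) * Real.exp (-(t/2) * r)))
      (Metric.ball_mem_nhds t (by positivity : (0:ℝ) < t/2))
      (Filter.Eventually.of_forall hFmeas) hFt_int (hF'meas t) ?_ hbound_int ?_
    · exact this.2
    · -- bound
      filter_upwards [ae_restrict_mem measurableSet_Ioi] with r hr
      intro u hu
      obtain ⟨h0, h1⟩ := hΦle r hr
      rw [mem_Ioi] at hr
      have hu2 := hball u hu
      have hrl : (0:ℝ) < r + lam := by linarith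
      have hnorm : ‖F' u r‖ = Real.exp (-u * (r + lam)) * Φ r := by
        simp only [hF'_def, neg_mul, Real.norm_eq_abs, abs_neg]
        rw [abs_of_nonneg (by positivity)]
      rw [hnorm]
      have hee : Real.exp (-u * (r + lam)) ≤ Real.exp (-(t/2) * (r + lam)) := by
        apply Real.exp_le_exp.mpr
        nlinarith
      have he : Real.exp (-(t/2) * (r + lam)) =
          Real.exp (-(t/2) * lam) * Real.exp (-(t/2) * r) := by
        rw [← Real.exp_add]; ring_nf
      calc Real.exp (-u * (r + lam)) * Φ r
          ≤ Real.exp (-(t/2) * (r + lam)) * (r ^ (-β) / s) :=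
            mul_le_mul hee h1 h0 (Real.exp_pos _).le
        _ = Real.exp (-(t/2) * lam) / s * (r ^ (-β) * Real.exp (-(t/2) * r)) := by
            rw [he]; ring
    · -- differentiability
      filter_upwards [ae_restrict_mem measurableSet_Ioi] with r hr
      intro u hu
      rw [mem_Ioi] at hr
      have hrl : (0:ℝ) < r + lam := by linarith
      have hd1 : HasDerivAt (fun u : ℝ => -u * (r + lam)) (-(r + lam)) u := by
        simpa using ((hasDerivAt_id u).neg.mul_const (r + lam))
      have hd2 := ((hd1.exp.const_mul ((r + lam)⁻¹)).mul_const (Φ r))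
      refine hd2.congr_deriv ?_
      simp only [hF'_def]
      rw [mul_comm (Real.exp _) (-(r + lam)), ← mul_assoc, mul_neg, inv_mul_cancel₀ hrl.ne']
      ring
  -- conclude
  have hfun : h = fun u => (μ / Real.pi) * ∫ r in Ioi (0:ℝ), F u r := funext hh
  have hderiv : HasDerivAt h ((μ / Real.pi) * ∫ r in Ioi (0:ℝ), F' t r) t := by
    rw [hfun]; exact key.const_mul _
  refine ⟨hderiv.differentiableAt, ?_⟩
  rw [hderiv.deriv]
  have hbnd : |∫ r in Ioi (0:ℝ), F' t r| ≤
      Real.exp (-t * lam) / s * ((1/t) ^ (1-β) * Real.Gamma (1-β)) := by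
    have hg_int : Integrable
        (fun r : ℝ => Real.exp (-t * lam) / s * (r ^ (-β) * Real.exp (-t * r)))
        (volume.restrict (Ioi (0:ℝ))) := (hGint t ht).const_mul _
    have hae : ∀ᵐ r ∂(volume.restrict (Ioi (0:ℝ))), ‖F' t r‖ ≤
        Real.exp (-t * lam) / s * (r ^ (-β) * Real.exp (-t * r)) := by
      filter_upwards [ae_restrict_mem measurableSet_Ioi] with r hr
      obtain ⟨h0, h1⟩ := hΦle r hr
      rw [mem_Ioi] at hr
      have hrl : (0:ℝ) < r + lam := by linarith
      have hnorm : ‖F' t r‖ = Real.exp (-t * (r + lam)) * Φ r := by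
        simp only [hF'_def, neg_mul, Real.norm_eq_abs, abs_neg]
        rw [abs_of_nonneg (by positivity)]
      rw [hnorm]
      have he : Real.exp (-t * (r + lam)) = Real.exp (-t * lam) * Real.exp (-t * r) := by
        rw [← Real.exp_add]; ring_nf
      calc Real.exp (-t * (r + lam)) * Φ r
          ≤ Real.exp (-t * (r + lam)) * (r ^ (-β) / s) :=
            mul_le_mul_of_nonneg_left h1 (Real.exp_pos _).le
        _ = Real.exp (-t * lam) / s * (r ^ (-β) * Real.exp (-t * r)) := by
            rw [he]; ring
    have hle := norm_integral_le_of_norm_le hg_int hae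
    rw [Real.norm_eq_abs] at hle
    refine hle.trans (le_of_eq ?_)
    rw [integral_const_mul]
    congr 1
    have := Real.integral_rpow_mul_exp_neg_mul_Ioi (by linarith : (0:ℝ) < 1 - β) ht
    rw [← this]
    apply setIntegral_congr_fun measurableSet_Ioi
    intro r hr
    simp only [show (1:ℝ) - β - 1 = -β by ring, neg_mul]
  have h1t : ((1:ℝ)/t) ^ (1-β) = t ^ (β - 1) := by
    rw [one_div, ← Real.rpow_neg_one t, ← Real.rpow_mul ht.le]
    congr 1
    ring
  rw [abs_mul, abs_of_nonneg (by positivity : (0:ℝ) ≤ μ / Real.pi)]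
  calc μ / Real.pi * |∫ r in Ioi (0:ℝ), F' t r|
      ≤ μ / Real.pi * (Real.exp (-t * lam) / s * ((1/t) ^ (1-β) * Real.Gamma (1-β))) := by
        apply mul_le_mul_of_nonneg_left hbnd (by positivity)
    _ = μ * Real.exp (-lam * t) * t ^ (β - 1) * Real.Gamma (1 - β) / (Real.pi * s) := by
        rw [h1t, show -lam * t = -t * lam by ring]
        field_simp
end

section
/- Let X be a stochastic process and E an independent nonnegative process with continuous sample paths. Let D be a domain and τ_D(X) = inf{t ≥ 0 : X(t) ∉ D}. If E(t) is nondecreasing and E(0)=0, then for every t ≥ 0, the events {τ_D(X) > E(t)} and {τ_D(X∘E) > t} coincide almost surely, where X∘E denotes the time-changed process s ↦ X(E(s)). -/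
open MeasureTheory Real

lemma exit_time_lt_iff_aux {α : Type*} [TopologicalSpace α] (D : Set α) (hD : IsOpen D)
    (f : ℝ → α) (hf : Continuous f) (a : ℝ) (ha : 0 ≤ a) :
    (ENNReal.ofReal a < ⨅ (s : ℝ) (_ : 0 ≤ s ∧ f s ∉ D), ENNReal.ofReal s) ↔
      ∀ s ∈ Set.Icc 0 a, f s ∈ D := by
  constructor
  · intro h s hs
    by_contra hsD
    have hle : (⨅ (s : ℝ) (_ : 0 ≤ s ∧ f s ∉ D), ENNReal.ofReal s) ≤ ENNReal.ofReal s :=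
      iInf₂_le s ⟨hs.1, hsD⟩
    have : ENNReal.ofReal s ≤ ENNReal.ofReal a := ENNReal.ofReal_le_ofReal hs.2
    exact absurd (h.trans_le hle) (not_lt.mpr this)
  · intro h
    have hfa : f a ∈ D := h a ⟨ha, le_refl a⟩
    have hopen : IsOpen (f ⁻¹' D) := hD.preimage hf
    have hmem : a ∈ f ⁻¹' D := hfa
    obtain ⟨ε, hε, hball⟩ := Metric.isOpen_iff.mp hopen a hmem
    have key : ∀ s : ℝ, 0 ≤ s ∧ f s ∉ D → a + ε / 2 ≤ s := by
      intro s ⟨hs0, hsD⟩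
      by_contra hlt
      push_neg at hlt
      rcases le_or_gt s a with hsa | has
      · exact hsD (h s ⟨hs0, hsa⟩)
      · have : s ∈ Metric.ball a ε := by
          rw [Metric.mem_ball, Real.dist_eq, abs_of_pos (sub_pos.mpr has)]
          linarith
        exact hsD (hball this)
    have hinf : ENNReal.ofReal (a + ε / 2) ≤
        ⨅ (s : ℝ) (_ : 0 ≤ s ∧ f s ∉ D), ENNReal.ofReal s := by
      apply le_iInf₂
      intro s hs
      exact ENNReal.ofReal_le_ofReal (key s hs)
    refine lt_of_lt_of_le ?_ hinf
    rw [ENNReal.ofReal_lt_ofReal_iff (by linarith)]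
    linarith

theorem time_changed_exit_time_event
    {Ω : Type*} [MeasurableSpace Ω] (P : Measure Ω) [IsProbabilityMeasure P]
    {α : Type*} [TopologicalSpace α] (D : Set α) (hD : IsOpen D)
    (X : Ω → ℝ → α) (E : Ω → ℝ → ℝ)
    (hXcont : ∀ ω, Continuous (X ω))
    (hEcont : ∀ ω, Continuous (E ω))
    (hEmono : ∀ ω, Monotone (E ω))
    (hE0 : ∀ ω, E ω 0 = 0)
    (τ : (ℝ → α) → ENNReal)
    (hτ : ∀ f : ℝ → α, τ f = ⨅ (s : ℝ) (_ : 0 ≤ s ∧ f s ∉ D), ENNReal.ofReal s)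
    (t : ℝ) (ht : 0 ≤ t) :
    ∀ᵐ ω ∂P,
      (ENNReal.ofReal (E ω t) < τ (X ω) ↔
        ENNReal.ofReal t < τ (fun s => X ω (E ω s))) := by
  refine Filter.Eventually.of_forall fun ω => ?_
  have hEt0 : 0 ≤ E ω t := by
    have := hEmono ω ht
    rwa [hE0 ω] at this
  rw [hτ, hτ]
  rw [exit_time_lt_iff_aux D hD (X ω) (hXcont ω) (E ω t) hEt0]
  rw [exit_time_lt_iff_aux D hD (fun s => X ω (E ω s)) ((hXcont ω).comp (hEcont ω)) t ht]
  constructor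
  · intro h s hs
    refine h (E ω s) ⟨?_, hEmono ω hs.2⟩
    have := hEmono ω hs.1
    rwa [hE0 ω] at this
  · intro h u hu
    have hIVT : Set.Icc (E ω 0) (E ω t) ⊆ E ω '' Set.Icc 0 t :=
      intermediate_value_Icc ht (hEcont ω).continuousOn
    rw [hE0 ω] at hIVT
    obtain ⟨s, hs, hsu⟩ := hIVT hu
    rw [← hsu]
    exact h s hs
end
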